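/- arXiv:1907.08420 — 2 statements merged into one kernel-verified Lean document; each statement's English description precedes it below -/
import Mathlib

section
/- Let 1 ≤ p < ∞ and ε > 0, and let f_ε(z) = (z + εi)^{−(2/p+ε)} (principal branch). Then (1/2)^{2+pε} · 1/(pε · ε^{pε}) ≤ ||f_ε||_{A^p(𝕌)}^p ≤ 2^{(2+pε)/2} · 1/(pε · ε^{pε}). -/
open MeasureTheory Complex Set Filter
open scoped ENNReal NNReal Topology Real

noncomputable section

/-- The upper half plane `{z : ℂ | Im z > 0}`. -/
def UHP : Set ℂ := {z : ℂ | 0 < z.im}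

/-- The `p`-th power of the Bergman `A^p(UHP)` norm: `(1/π) ∫_UHP |f|^p dA`. -/
def apNormPow (p : ℝ) (f : ℂ → ℂ) : ℝ≥0∞ :=
  ENNReal.ofReal (1 / Real.pi) * ∫⁻ z in UHP, (‖f z‖₊ : ℝ≥0∞) ^ p

/-- The Bergman `A^p(UHP)` norm: `((1/π) ∫_UHP |f|^p dA)^(1/p)`. -/
def apNorm (p : ℝ) (f : ℂ → ℂ) : ℝ≥0∞ := apNormPow p f ^ (1 / p)

/-- Membership in the Bergman space `A^p(UHP)`: holomorphic on `UHP` with finite norm. -/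
def MemAp (p : ℝ) (f : ℂ → ℂ) : Prop :=
  DifferentiableOn ℂ f UHP ∧ apNormPow p f < ⊤

/-- The Hausdorff operator `H_μ f z = ∫_0^∞ (1/t) f(z/t) dμ(t)`. -/
def hausdorffOp (μ : Measure ℝ) (f : ℂ → ℂ) (z : ℂ) : ℂ :=
  ∫ t in Ioi (0:ℝ), (t : ℂ)⁻¹ * f (z / (t : ℂ)) ∂μ

/-- The test function `f_ε(z) = (z + εi)^{-(2/p+ε)}` (principal branch). -/
def testf (p ε : ℝ) (z : ℂ) : ℂ := (z + ε * Complex.I) ^ ((-(2 / p + ε) : ℝ) : ℂ)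

/-! With `t = pε`, `|f_ε(z)|^p = |z + εi|^{-(2+t)}`. Since
`(|x| + y)/√2 ≤ |x + iy| ≤ |x| + y`, this is squeezed between `(|Re z| + Im z + ε)^{-(2+t)}`
and `2^{(2+t)/2}` times it, and by Tonelli the latter integrates over the half plane to exactly
`2 / ((1+t) t ε^t)`. It remains to note that `(1/2)^{2+t} ≤ (1/π)·2/(1+t) ≤ 1`. -/

lemma lintegral_comp_abs (f : ℝ → ℝ≥0∞) : ∫⁻ x, f |x| = 2 * ∫⁻ x in Ioi 0, f x := by
  have hpos : ∫⁻ x in Ioi 0, f |x| = ∫⁻ x in Ioi 0, f x :=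
    setLIntegral_congr_fun measurableSet_Ioi fun x hx => by rw [abs_of_pos hx]
  have hneg : ∫⁻ x in Iic 0, f |x| = ∫⁻ x in Ioi 0, f x := by
    have h := MeasurePreserving.setLIntegral_comp_preimage_emb
      (Measure.measurePreserving_neg (volume : Measure ℝ)) measurableEmbedding_neg
      (fun x => f |x|) (Ioi 0)
    rw [neg_preimage, neg_Ioi, neg_zero] at h
    simp only [abs_neg] at h
    rw [setLIntegral_congr Iio_ae_eq_Iic.symm, h, hpos]
  rw [← setLIntegral_univ, ← Iic_union_Ioi,
    lintegral_union measurableSet_Ioi (Iic_disjoint_Ioi le_rfl), hneg, hpos, two_mul]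

lemma lintegral_Ioi_add_rpow_neg {s b : ℝ} (hs : 0 < s) (hb : 1 < b) :
    ∫⁻ x in Ioi 0, ENNReal.ofReal ((x + s) ^ (-b)) =
      ENNReal.ofReal (s ^ (1 - b) / (b - 1)) := by
  have hshift := MeasurePreserving.setLIntegral_comp_preimage_emb
    (measurePreserving_add_right (volume : Measure ℝ) s) (measurableEmbedding_addRight s)
    (fun x => ENNReal.ofReal (x ^ (-b))) (Ioi s)
  rw [preimage_add_const_Ioi, sub_self] at hshift
  rw [hshift,
    ← ofReal_integral_eq_lintegral_ofReal (integrableOn_Ioi_rpow_of_lt (by linarith) hs)]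
  · rw [integral_Ioi_rpow_of_lt (by linarith) hs, neg_add_eq_sub, neg_div, ← div_neg, neg_sub]
  · filter_upwards [ae_restrict_mem measurableSet_Ioi] with x hx
    exact Real.rpow_nonneg (hs.trans hx).le _

lemma lintegral_abs_add_rpow_neg {s b : ℝ} (hs : 0 < s) (hb : 1 < b) :
    ∫⁻ x, ENNReal.ofReal ((|x| + s) ^ (-b)) =
      ENNReal.ofReal (2 * (s ^ (1 - b) / (b - 1))) := by
  rw [lintegral_comp_abs (fun x => ENNReal.ofReal ((x + s) ^ (-b))),
    lintegral_Ioi_add_rpow_neg hs hb, ENNReal.ofReal_mul zero_le_two, ENNReal.ofReal_ofNat]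

lemma measurableSet_UHP : MeasurableSet UHP :=
  measurableSet_lt measurable_const Complex.measurable_im

lemma lintegral_UHP {g : ℂ → ℝ≥0∞} (hg : Measurable g) :
    ∫⁻ z in UHP, g z = ∫⁻ y in Ioi (0 : ℝ), ∫⁻ x : ℝ, g (x + y * I) := by
  have hG : Measurable fun q : ℝ × ℝ => g (q.1 + q.2 * I) := hg.comp (by fun_prop)
  have h := volume_preserving_equiv_real_prod.setLIntegral_comp_preimage_emb
    measurableEquivRealProd.measurableEmbedding (fun q : ℝ × ℝ => g (q.1 + q.2 * I))
    (univ ×ˢ Ioi 0)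
  have hUHP : measurableEquivRealProd ⁻¹' (univ ×ˢ Ioi 0) = UHP := by
    ext z; simp [UHP]
  simp only [hUHP, measurableEquivRealProd_apply, re_add_im] at h
  rw [h, Measure.volume_eq_prod, ← Measure.prod_restrict, Measure.restrict_univ,
    lintegral_prod_symm' _ hG]

lemma Complex.abs_re_add_abs_im_le_sqrt_two_mul_norm (z : ℂ) :
    |z.re| + |z.im| ≤ √2 * ‖z‖ := by
  rw [norm_def, ← Real.sqrt_mul zero_le_two, normSq_apply]
  refine Real.le_sqrt_of_sq_le ?_
  nlinarith [sq_nonneg (|z.re| - |z.im|), sq_abs z.re, sq_abs z.im]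

lemma Complex.abs_re_add_abs_im_rpow_neg_le {z : ℂ} (hz : z ≠ 0) {b : ℝ} (hb : 0 ≤ b) :
    (|z.re| + |z.im|) ^ (-b) ≤ ‖z‖ ^ (-b) :=
  Real.rpow_le_rpow_of_nonpos (norm_pos_iff.mpr hz) (norm_le_abs_re_add_abs_im z)
    (neg_nonpos.mpr hb)

lemma Complex.norm_rpow_neg_le {z : ℂ} (hz : z ≠ 0) {b : ℝ} (hb : 0 ≤ b) :
    ‖z‖ ^ (-b) ≤ 2 ^ (b / 2) * (|z.re| + |z.im|) ^ (-b) := by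
  have hsqrt : (√2 : ℝ) ^ b = 2 ^ (b / 2) := by
    rw [Real.sqrt_eq_rpow, ← Real.rpow_mul zero_le_two, one_div_mul_eq_div]
  calc ‖z‖ ^ (-b) = 2 ^ (b / 2) * (√2 * ‖z‖) ^ (-b) := by
        rw [Real.mul_rpow (by positivity) (norm_nonneg z), ← mul_assoc, ← hsqrt,
          ← Real.rpow_add (by positivity), add_neg_cancel, Real.rpow_zero, one_mul]
    _ ≤ 2 ^ (b / 2) * (|z.re| + |z.im|) ^ (-b) := by
        refine mul_le_mul_of_nonneg_left (Real.rpow_le_rpow_of_nonpos ?_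
          (abs_re_add_abs_im_le_sqrt_two_mul_norm z) (neg_nonpos.mpr hb)) (by positivity)
        exact (norm_pos_iff.mpr hz).trans_le (norm_le_abs_re_add_abs_im z)

lemma lintegral_UHP_abs_re_add_im_rpow_neg {ε t : ℝ} (hε : 0 < ε) (ht : 0 < t) :
    ∫⁻ z in UHP, ENNReal.ofReal ((|z.re| + (z.im + ε)) ^ (-(2 + t))) =
      ENNReal.ofReal (2 / ((1 + t) * t * ε ^ t)) := by
  have hc : 0 ≤ 2 / (1 + t) := by positivity
  rw [lintegral_UHP (by fun_prop)]
  simp only [add_re, ofReal_re, mul_re, I_re, I_im, ofReal_im, mul_zero, mul_one, sub_zero,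
    add_zero, add_im, mul_im, zero_add]
  calc ∫⁻ y in Ioi (0 : ℝ), ∫⁻ x : ℝ, ENNReal.ofReal ((|x| + (y + ε)) ^ (-(2 + t)))
      = ∫⁻ y in Ioi (0 : ℝ),
          ENNReal.ofReal (2 / (1 + t)) * ENNReal.ofReal ((y + ε) ^ (-(1 + t))) :=
        setLIntegral_congr_fun measurableSet_Ioi fun y hy => by
          rw [lintegral_abs_add_rpow_neg (by linarith [mem_Ioi.mp hy]) (by linarith),
            ← ENNReal.ofReal_mul hc]
          ring_nf
    _ = ENNReal.ofReal (2 / ((1 + t) * t * ε ^ t)) := by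
        rw [lintegral_const_mul' _ _ ENNReal.ofReal_ne_top,
          lintegral_Ioi_add_rpow_neg hε (by linarith), ← ENNReal.ofReal_mul hc,
          show 1 - (1 + t) = -t by ring, add_sub_cancel_left, Real.rpow_neg hε.le]
        congr 1
        field_simp

section

variable {ε t : ℝ} (hε : 0 < ε) (ht : 0 < t)
include hε ht

lemma norm_add_mul_I_rpow_neg_bounds {z : ℂ} (hz : z ∈ UHP) :
    (|z.re| + (z.im + ε)) ^ (-(2 + t)) ≤ ‖z + ε * I‖ ^ (-(2 + t)) ∧
      ‖z + ε * I‖ ^ (-(2 + t)) ≤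
        2 ^ ((2 + t) / 2) * (|z.re| + (z.im + ε)) ^ (-(2 + t)) := by
  have him : 0 < (z + ε * I).im := by simpa using add_pos (show 0 < z.im from hz) hε
  have hre_im : |(z + ε * I).re| + |(z + ε * I).im| = |z.re| + (z.im + ε) := by
    rw [abs_of_pos him]; simp
  rw [← hre_im]
  have hne : z + ε * I ≠ 0 := fun h => by simp [h] at him
  exact ⟨abs_re_add_abs_im_rpow_neg_le hne (by linarith),
    norm_rpow_neg_le hne (by linarith)⟩

lemma le_lintegral_UHP_norm_add_mul_I_rpow_neg :
    ENNReal.ofReal (2 / ((1 + t) * t * ε ^ t)) ≤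
      ∫⁻ z in UHP, ENNReal.ofReal (‖z + ε * I‖ ^ (-(2 + t))) := by
  rw [← lintegral_UHP_abs_re_add_im_rpow_neg hε ht]
  exact setLIntegral_mono' measurableSet_UHP fun z hz =>
    ENNReal.ofReal_le_ofReal (norm_add_mul_I_rpow_neg_bounds hε ht hz).1

lemma lintegral_UHP_norm_add_mul_I_rpow_neg_le :
    ∫⁻ z in UHP, ENNReal.ofReal (‖z + ε * I‖ ^ (-(2 + t))) ≤
      ENNReal.ofReal (2 ^ ((2 + t) / 2) * (2 / ((1 + t) * t * ε ^ t))) := by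
  rw [ENNReal.ofReal_mul (by positivity), ← lintegral_UHP_abs_re_add_im_rpow_neg hε ht,
    ← lintegral_const_mul' _ _ ENNReal.ofReal_ne_top]
  refine setLIntegral_mono' measurableSet_UHP fun z hz => ?_
  rw [← ENNReal.ofReal_mul (by positivity)]
  exact ENNReal.ofReal_le_ofReal (norm_add_mul_I_rpow_neg_bounds hε ht hz).2

end

lemma enorm_testf_rpow {p : ℝ} (hp : 0 < p) (ε : ℝ) (z : ℂ) :
    (‖testf p ε z‖₊ : ℝ≥0∞) ^ p = ENNReal.ofReal (‖z + ε * I‖ ^ (-(2 + p * ε))) := by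
  rw [← enorm_eq_nnnorm, ← ofReal_norm, ENNReal.ofReal_rpow_of_nonneg (norm_nonneg _) hp.le,
    testf, norm_cpow_real, ← Real.rpow_mul (norm_nonneg _)]
  congr 2
  field_simp

lemma half_rpow_two_add_le_inv_pi_mul {t : ℝ} (ht : 0 ≤ t) :
    (1 / 2 : ℝ) ^ (2 + t) ≤ 1 / π * (2 / (1 + t)) := by
  have hbernoulli : 1 + (1 + t) * 1 ≤ (1 + 1 : ℝ) ^ (1 + t) :=
    one_add_mul_self_le_rpow_one_add (by norm_num) (by linarith)
  norm_num at hbernoulli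
  calc (1 / 2 : ℝ) ^ (2 + t) = 1 / (2 * 2 ^ (1 + t)) := by
        rw [Real.div_rpow zero_le_one zero_le_two, Real.one_rpow,
          show 2 + t = 1 + (1 + t) by ring, Real.rpow_add zero_lt_two, Real.rpow_one]
    _ ≤ 1 / (π / 2 * (1 + t)) := by
        refine one_div_le_one_div_of_le (by positivity) ?_
        nlinarith [Real.pi_le_four]
    _ = 1 / π * (2 / (1 + t)) := by field_simp

lemma inv_pi_mul_two_div_le_one {t : ℝ} (ht : 0 ≤ t) : 1 / π * (2 / (1 + t)) ≤ 1 := by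
  rw [one_div_mul_eq_div, div_le_one Real.pi_pos]
  calc 2 / (1 + t) ≤ 2 := div_le_self zero_le_two (by linarith)
    _ ≤ π := by linarith [Real.pi_gt_three]

theorem stmt12 (p ε : ℝ) (hp : 1 ≤ p) (hε : 0 < ε) :
    ENNReal.ofReal ((1/2 : ℝ) ^ (2 + p * ε) * (1 / (p * ε * ε ^ (p * ε)))) ≤
        apNormPow p (testf p ε) ∧
    apNormPow p (testf p ε) ≤
        ENNReal.ofReal ((2 : ℝ) ^ ((2 + p * ε) / 2) * (1 / (p * ε * ε ^ (p * ε)))) := by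
  have hp0 : 0 < p := by linarith
  have ht : 0 < p * ε := mul_pos hp0 hε
  set t := p * ε
  have hK : 0 < 1 / (t * ε ^ t) := by positivity
  have hsplit : 2 / ((1 + t) * t * ε ^ t) = 2 / (1 + t) * (1 / (t * ε ^ t)) := by
    rw [mul_assoc, div_mul_div_comm, mul_one]
  have hnorm : apNormPow p (testf p ε) =
      ENNReal.ofReal (1 / π) * ∫⁻ z in UHP, ENNReal.ofReal (‖z + ε * I‖ ^ (-(2 + t))) := by
    simp only [apNormPow, enorm_testf_rpow hp0, t]
  rw [hnorm]
  constructor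
  · refine (mul_le_mul_right (le_lintegral_UHP_norm_add_mul_I_rpow_neg hε ht) _).trans' ?_
    rw [← ENNReal.ofReal_mul (by positivity), hsplit, ← mul_assoc]
    exact ENNReal.ofReal_le_ofReal (mul_le_mul_of_nonneg_right
      (half_rpow_two_add_le_inv_pi_mul ht.le) hK.le)
  · refine (mul_le_mul_right (lintegral_UHP_norm_add_mul_I_rpow_neg_le hε ht) _).trans ?_
    rw [← ENNReal.ofReal_mul (by positivity), hsplit]
    refine ENNReal.ofReal_le_ofReal ?_
    calc 1 / π * (2 ^ ((2 + t) / 2) * (2 / (1 + t) * (1 / (t * ε ^ t))))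
        = 2 ^ ((2 + t) / 2) * (1 / π * (2 / (1 + t))) * (1 / (t * ε ^ t)) := by ring
      _ ≤ 2 ^ ((2 + t) / 2) * (1 / (t * ε ^ t)) := by
        gcongr
        exact mul_le_of_le_one_right (by positivity) (inv_pi_mul_two_div_le_one ht.le)
end
end

section
/- Let 1 ≤ p < ∞ and 0 < δ < 1, and let μ be a σ-finite positive Borel measure on (0,∞) with ∫_0^∞ t^{2/p − 1} dμ(t) < ∞. Then for every f ∈ A^p(𝕌), ||H_μ(f) − H_μ^δ(f)||_{A^p(𝕌)} ≤ (∫_{(0,δ) ∪ (1/δ, ∞)} t^{2/p − 1} dμ(t)) · ||f||_{A^p(𝕌)}. -/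
open MeasureTheory Complex Set Filter
open scoped ENNReal NNReal Topology Real

noncomputable section

/-- The truncated Hausdorff operator `H_μ^δ f z = ∫_{[δ,1/δ]} (1/t) f(z/t) dμ(t)`. -/
def hausdorffTrunc (μ : Measure ℝ) (δ : ℝ) (f : ℂ → ℂ) (z : ℂ) : ℂ :=
  ∫ t in Icc δ (1/δ), (t : ℂ)⁻¹ * f (z / (t : ℂ)) ∂μ


/-! `H_μ f - H_μ^δ f` is the `μ`-integral over `S = (0, δ) ∪ (1/δ, ∞)` of the dilations
`f_t(z) = t⁻¹ f(z / t)`. Since `z ↦ z / t` preserves the half plane and scales area by `t²`,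
`‖f_t‖_{A^p} = t^{2/p - 1} ‖f‖_{A^p}`, and Minkowski's integral inequality gives the bound. -/

lemma isOpen_UHP : IsOpen UHP := isOpen_lt continuous_const Complex.continuous_im

lemma div_ofReal_mem_UHP_iff {z : ℂ} {t : ℝ} (ht : 0 < t) : z / t ∈ UHP ↔ z ∈ UHP := by
  simp only [UHP, mem_ofPred_eq, Complex.div_ofReal_im]
  exact div_pos_iff_of_pos_right ht

theorem lintegral_comp_inv_smul {E : Type*} [NormedAddCommGroup E] [NormedSpace ℝ E]
    [MeasurableSpace E] [BorelSpace E] [FiniteDimensional ℝ E] (μ : Measure E) [μ.IsAddHaarMeasure]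
    (F : E → ℝ≥0∞) {r : ℝ} (hr : r ≠ 0) :
    ∫⁻ x, F (r⁻¹ • x) ∂μ = ENNReal.ofReal |r ^ Module.finrank ℝ E| * ∫⁻ x, F x ∂μ := by
  have hr' : r⁻¹ ≠ 0 := inv_ne_zero hr
  change ∫⁻ x, F (MeasurableEquiv.smul₀ r⁻¹ hr' x) ∂μ = _
  rw [← lintegral_map_equiv, MeasurableEquiv.coe_smul₀, Measure.map_addHaar_smul μ hr',
    lintegral_smul_measure, inv_pow, inv_inv, smul_eq_mul]

lemma setLIntegral_UHP_comp_div_ofReal (F : ℂ → ℝ≥0∞) {t : ℝ} (ht : 0 < t) :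
    ∫⁻ z in UHP, F (z / t) = ENNReal.ofReal (t ^ 2) * ∫⁻ z in UHP, F z := by
  have hind : UHP.indicator (fun z => F (z / t)) = fun z => UHP.indicator F ((t⁻¹ : ℝ) • z) := by
    funext z
    rw [Complex.real_smul, Complex.ofReal_inv, ← div_eq_inv_mul]
    by_cases hz : z ∈ UHP
    · rw [indicator_of_mem hz, indicator_of_mem ((div_ofReal_mem_UHP_iff ht).2 hz)]
    · rw [indicator_of_notMem hz, indicator_of_notMem (mt (div_ofReal_mem_UHP_iff ht).1 hz)]
  rw [← lintegral_indicator measurableSet_UHP, hind, lintegral_comp_inv_smul _ _ ht.ne',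
    lintegral_indicator measurableSet_UHP, Complex.finrank_real_complex, abs_of_pos (by positivity)]

def dilate (t : ℝ) (f : ℂ → ℂ) (z : ℂ) : ℂ := (t : ℂ)⁻¹ * f (z / t)

lemma setLIntegral_UHP_enorm_dilate_rpow (f : ℂ → ℂ) {p t : ℝ} (hp : 0 < p) (ht : 0 < t) :
    ∫⁻ z in UHP, ‖dilate t f z‖ₑ ^ p =
      ENNReal.ofReal (t ^ (2 / p - 1)) ^ p * ∫⁻ z in UHP, ‖f z‖ₑ ^ p := by
  have hsplit : ∀ z, ‖dilate t f z‖ₑ ^ p = ENNReal.ofReal t⁻¹ ^ p * ‖f (z / t)‖ₑ ^ p := by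
    intro z
    rw [dilate, enorm_mul, ENNReal.mul_rpow_of_nonneg _ _ hp.le, ← ofReal_norm, norm_inv,
      Complex.norm_real, Real.norm_of_nonneg ht.le]
  simp_rw [hsplit]
  rw [lintegral_const_mul' _ _ (by finiteness),
    setLIntegral_UHP_comp_div_ofReal (fun w => ‖f w‖ₑ ^ p) ht, ← mul_assoc]
  congr 1
  rw [ENNReal.ofReal_rpow_of_pos (inv_pos.2 ht), ENNReal.ofReal_rpow_of_pos (by positivity),
    ← ENNReal.ofReal_mul (by positivity), ← Real.rpow_mul ht.le, Real.inv_rpow ht.le,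
    ← Real.rpow_natCast, ← Real.rpow_neg ht.le, ← Real.rpow_add ht]
  congr 2
  field_simp
  ring

lemma continuousOn_dilate_uncurry {f : ℂ → ℂ} (hf : ContinuousOn f UHP) :
    ContinuousOn (fun q : ℂ × ℝ => dilate q.2 f q.1) (UHP ×ˢ Ioi 0) := by
  rintro ⟨z, t⟩ ⟨hz, ht⟩
  have ht0 : (t : ℂ) ≠ 0 := Complex.ofReal_ne_zero.2 (ne_of_gt ht)
  have hcoe : Continuous fun q : ℂ × ℝ => (q.2 : ℂ) := Complex.continuous_ofReal.comp continuous_snd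
  refine ((hcoe.continuousAt.inv₀ ht0).mul ?_).continuousWithinAt
  exact ContinuousAt.comp (g := f) (f := fun q : ℂ × ℝ => q.1 / q.2)
    (hf.continuousAt (isOpen_UHP.mem_nhds ((div_ofReal_mem_UHP_iff ht).2 hz)))
    (continuous_fst.continuousAt.div hcoe.continuousAt ht0)

lemma aemeasurable_enorm_dilate_uncurry {f : ℂ → ℂ} (hf : ContinuousOn f UHP) (μ : Measure ℝ)
    [SFinite μ] {S : Set ℝ} (hS : MeasurableSet S) (hSpos : S ⊆ Ioi 0) :
    AEMeasurable (Function.uncurry fun z t => ‖dilate t f z‖ₑ)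
      ((volume.restrict UHP).prod (μ.restrict S)) := by
  rw [Measure.prod_restrict]
  exact (((continuousOn_dilate_uncurry hf).mono (prod_mono subset_rfl hSpos)).aemeasurable
    (measurableSet_UHP.prod hS)).enorm

section Weighted

variable {α : Type*} [MeasurableSpace α]

/-- Hölder's inequality for `G = W^{1/q} · W^{-1/q} G`, with `q` the conjugate exponent of `p`. -/
theorem rpow_lintegral_le_mul_lintegral_weight {ν : Measure α} {p : ℝ} (hp : 1 ≤ p)
    {W G : α → ℝ≥0∞} (hW : AEMeasurable W ν) (hG : AEMeasurable G ν)
    (hW0 : ∀ᵐ t ∂ν, W t ≠ 0 ∧ W t ≠ ⊤) :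
    (∫⁻ t, G t ∂ν) ^ p ≤ (∫⁻ t, W t ∂ν) ^ (p - 1) * ∫⁻ t, W t ^ (1 - p) * G t ^ p ∂ν := by
  rcases hp.eq_or_lt with rfl | hp1
  · simp
  set q := p.conjExponent
  have hpq : p.HolderConjugate q := .conjExponent hp1
  have hp0 : p ≠ 0 := hpq.ne_zero
  have hsplit : ∀ᵐ t ∂ν, W t ^ (1 / q) * (W t ^ ((1 - p) / p) * G t) = G t := by
    filter_upwards [hW0] with t ⟨h0, htop⟩
    have hexp : 1 / q + (1 - p) / p = 0 := by
      have : (1 - p) / p = p⁻¹ - 1 := by field_simp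
      linarith [hpq.inv_add_inv_eq_one, one_div q]
    rw [← mul_assoc, ← ENNReal.rpow_add _ _ h0 htop, hexp, ENNReal.rpow_zero, one_mul]
  have hHolder : ∫⁻ t, G t ∂ν ≤ (∫⁻ t, (W t ^ (1 / q)) ^ q ∂ν) ^ (1 / q) *
      (∫⁻ t, (W t ^ ((1 - p) / p) * G t) ^ p ∂ν) ^ (1 / p) :=
    (lintegral_congr_ae hsplit).symm.trans_le <| ENNReal.lintegral_mul_le_Lp_mul_Lq ν hpq.symm
      (hW.pow_const (1 / q)) ((hW.pow_const ((1 - p) / p)).mul hG)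
  have hA : ∫⁻ t, (W t ^ (1 / q)) ^ q ∂ν = ∫⁻ t, W t ∂ν := by
    simp_rw [← ENNReal.rpow_mul, one_div_mul_cancel hpq.symm.ne_zero, ENNReal.rpow_one]
  have hB : ∫⁻ t, (W t ^ ((1 - p) / p) * G t) ^ p ∂ν = ∫⁻ t, W t ^ (1 - p) * G t ^ p ∂ν := by
    simp_rw [ENNReal.mul_rpow_of_nonneg _ _ hpq.nonneg, ← ENNReal.rpow_mul,
      div_mul_cancel₀ _ hp0]
  rw [hA, hB] at hHolder
  calc (∫⁻ t, G t ∂ν) ^ p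
      ≤ ((∫⁻ t, W t ∂ν) ^ (1 / q) * (∫⁻ t, W t ^ (1 - p) * G t ^ p ∂ν) ^ (1 / p)) ^ p := by
        gcongr
    _ = (∫⁻ t, W t ∂ν) ^ (p - 1) * ∫⁻ t, W t ^ (1 - p) * G t ^ p ∂ν := by
        rw [ENNReal.mul_rpow_of_nonneg _ _ hpq.nonneg, ← ENNReal.rpow_mul, ← ENNReal.rpow_mul,
          one_div_mul_cancel hp0, ENNReal.rpow_one, one_div_mul_eq_div, hpq.div_conj_eq_sub_one]

/-- Minkowski's integral inequality when the `L^p(μ)` norm of each slice `F · y` is `W y · N^{1/p}`,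
via the weighted Hölder inequality with weight `W` and Tonelli. -/
theorem lintegral_rpow_lintegral_le_of_lintegral_rpow_eq {β : Type*} [MeasurableSpace β]
    {μ : Measure α} {ν : Measure β} [SFinite μ] [SFinite ν] {p : ℝ} (hp : 1 ≤ p)
    {F : α → β → ℝ≥0∞} (hF : AEMeasurable (Function.uncurry F) (μ.prod ν))
    {W : β → ℝ≥0∞} (hW : AEMeasurable W ν) (hW0 : ∀ᵐ y ∂ν, W y ≠ 0 ∧ W y ≠ ⊤) {N : ℝ≥0∞}
    (hFW : ∀ᵐ y ∂ν, ∫⁻ x, F x y ^ p ∂μ = W y ^ p * N) :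
    ∫⁻ x, (∫⁻ y, F x y ∂ν) ^ p ∂μ ≤ (∫⁻ y, W y ∂ν) ^ p * N := by
  set I := ∫⁻ y, W y ∂ν
  have hH : AEMeasurable (Function.uncurry fun x y => W y ^ (1 - p) * F x y ^ p) (μ.prod ν) :=
    (hW.comp_snd.pow_const _).mul (hF.pow_const p)
  calc ∫⁻ x, (∫⁻ y, F x y ∂ν) ^ p ∂μ
      ≤ ∫⁻ x, I ^ (p - 1) * ∫⁻ y, W y ^ (1 - p) * F x y ^ p ∂ν ∂μ := by
        refine lintegral_mono_ae ?_
        filter_upwards [hF.aestronglyMeasurable.prodMk_left] with x hx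
        exact rpow_lintegral_le_mul_lintegral_weight hp hW hx.aemeasurable hW0
    _ = I ^ (p - 1) * ∫⁻ y, ∫⁻ x, W y ^ (1 - p) * F x y ^ p ∂μ ∂ν := by
        have hinner : AEMeasurable (fun x => ∫⁻ y, W y ^ (1 - p) * F x y ^ p ∂ν) μ :=
          hH.lintegral_prod_right'
        rw [lintegral_const_mul'' _ hinner, lintegral_lintegral_swap hH]
    _ = I ^ (p - 1) * ∫⁻ y, W y * N ∂ν := by
        congr 1
        refine lintegral_congr_ae ?_
        filter_upwards [hW0, hFW] with y ⟨h0, htop⟩ hy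
        rw [lintegral_const_mul' _ _ (ENNReal.rpow_ne_top_of_ne_zero h0 htop), hy, ← mul_assoc,
          ← ENNReal.rpow_add _ _ h0 htop, sub_add_cancel, ENNReal.rpow_one]
    _ = I ^ p * N := by
        rw [lintegral_mul_const'' _ hW, ← mul_assoc]
        conv_rhs => rw [← sub_add_cancel p 1,
          ENNReal.rpow_add_of_nonneg _ _ (sub_nonneg.2 hp) zero_le_one, ENNReal.rpow_one]

end Weighted

theorem enorm_setIntegral_sub_setIntegral_le {α E : Type*} [MeasurableSpace α]
    [NormedAddCommGroup E] [NormedSpace ℝ E] {ν : Measure α} {g : α → E} {A B : Set α}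
    (hA : MeasurableSet A) (hAB : A ⊆ B) (hg : AEStronglyMeasurable g (ν.restrict B)) :
    ‖∫ x in B, g x ∂ν - ∫ x in A, g x ∂ν‖ₑ ≤ ∫⁻ x in B \ A, ‖g x‖ₑ ∂ν := by
  by_cases hfin : ∫⁻ x in B \ A, ‖g x‖ₑ ∂ν = ⊤
  · exact hfin ▸ le_top
  have hgD : IntegrableOn g (B \ A) ν := ⟨hg.mono_set sdiff_subset, lt_top_iff_ne_top.2 hfin⟩
  by_cases hgA : IntegrableOn g A ν
  · have hsplit := setIntegral_union disjoint_sdiff_left hA hgD hgA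
    rw [sdiff_union_of_subset hAB] at hsplit
    rw [hsplit, add_sub_cancel_right]
    exact enorm_integral_le_lintegral_enorm g
  · have hgB : ¬IntegrableOn g B ν := fun h => hgA (h.mono_set hAB)
    rw [integral_undef hgA, integral_undef hgB, sub_zero, enorm_zero]
    exact zero_le

lemma enorm_hausdorffOp_sub_hausdorffTrunc_le {f : ℂ → ℂ} (hf : ContinuousOn f UHP) {δ : ℝ}
    (hδ : 0 < δ) (μ : Measure ℝ) {z : ℂ} (hz : z ∈ UHP) :
    ‖hausdorffOp μ f z - hausdorffTrunc μ δ f z‖ₑ ≤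
      ∫⁻ t in Ioo 0 δ ∪ Ioi (1 / δ), ‖dilate t f z‖ₑ ∂μ := by
  have hS : Ioi 0 \ Icc δ (1 / δ) = Ioo 0 δ ∪ Ioi (1 / δ) := by
    ext t
    simp only [Set.mem_sdiff, mem_Ioi, mem_Icc, mem_union, mem_Ioo, not_and_or, not_le]
    constructor
    · rintro ⟨ht, h | h⟩
      exacts [Or.inl ⟨ht, h⟩, Or.inr h]
    · rintro (⟨ht, h⟩ | h)
      exacts [⟨ht, Or.inl h⟩, ⟨(one_div_pos.2 hδ).trans h, Or.inr h⟩]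
  have hslice : ContinuousOn (fun t => dilate t f z) (Ioi 0) :=
    (continuousOn_dilate_uncurry hf).comp (f := fun t : ℝ => (z, t))
      (continuousOn_const.prodMk continuousOn_id) fun t ht => ⟨hz, ht⟩
  rw [← hS]
  exact enorm_setIntegral_sub_setIntegral_le measurableSet_Icc
    (fun t ht => hδ.trans_le ht.1) (hslice.aestronglyMeasurable measurableSet_Ioi)

lemma apNorm_le_of_apNormPow_le {p : ℝ} (hp : 0 < p) {f g : ℂ → ℂ} {C : ℝ≥0∞}
    (h : apNormPow p g ≤ C ^ p * apNormPow p f) : apNorm p g ≤ C * apNorm p f := by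
  calc apNorm p g ≤ (C ^ p * apNormPow p f) ^ (1 / p) := by unfold apNorm; gcongr
    _ = C * apNorm p f := by
      rw [ENNReal.mul_rpow_of_nonneg _ _ (by positivity), ← ENNReal.rpow_mul,
        mul_one_div_cancel hp.ne', ENNReal.rpow_one, apNorm]

theorem stmt13_general (p δ : ℝ) (hp : 1 ≤ p) (hδ0 : 0 < δ)
    (μ : Measure ℝ) [SigmaFinite μ] :
    ∀ f : ℂ → ℂ, MemAp p f →
      apNorm p (fun z => hausdorffOp μ f z - hausdorffTrunc μ δ f z) ≤
        (∫⁻ t in Ioo 0 δ ∪ Ioi (1/δ), ENNReal.ofReal (t ^ (2 / p - 1)) ∂μ) *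
          apNorm p f := by
  intro f hf
  have hfc : ContinuousOn f UHP := hf.1.continuousOn
  set S := Ioo 0 δ ∪ Ioi (1 / δ)
  have hS : MeasurableSet S := measurableSet_Ioo.union measurableSet_Ioi
  have hSpos : S ⊆ Ioi 0 := union_subset Ioo_subset_Ioi_self fun t h => (one_div_pos.2 hδ0).trans h
  have hW0 : ∀ᵐ t ∂μ.restrict S, ENNReal.ofReal (t ^ (2 / p - 1)) ≠ 0 ∧
      ENNReal.ofReal (t ^ (2 / p - 1)) ≠ ⊤ :=
    ae_restrict_of_forall_mem hS fun t ht =>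
      ⟨(ENNReal.ofReal_pos.2 (Real.rpow_pos_of_pos (hSpos ht) _)).ne', ENNReal.ofReal_ne_top⟩
  have hFW : ∀ᵐ t ∂μ.restrict S, ∫⁻ z in UHP, ‖dilate t f z‖ₑ ^ p =
      ENNReal.ofReal (t ^ (2 / p - 1)) ^ p * ∫⁻ z in UHP, ‖f z‖ₑ ^ p :=
    ae_restrict_of_forall_mem hS fun t ht =>
      setLIntegral_UHP_enorm_dilate_rpow f (by linarith) (hSpos ht)
  refine apNorm_le_of_apNormPow_le (by linarith) ?_
  simp only [apNormPow, ← enorm_eq_nnnorm]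
  rw [mul_left_comm]
  gcongr
  calc ∫⁻ z in UHP, ‖hausdorffOp μ f z - hausdorffTrunc μ δ f z‖ₑ ^ p
      ≤ ∫⁻ z in UHP, (∫⁻ t in S, ‖dilate t f z‖ₑ ∂μ) ^ p :=
        setLIntegral_mono' measurableSet_UHP fun z hz => by
          gcongr; exact enorm_hausdorffOp_sub_hausdorffTrunc_le hfc hδ0 μ hz
    _ ≤ _ := lintegral_rpow_lintegral_le_of_lintegral_rpow_eq hp
        (aemeasurable_enorm_dilate_uncurry hfc μ hS hSpos) (by fun_prop) hW0 hFW

theorem stmt13 (p δ : ℝ) (hp : 1 ≤ p) (hδ0 : 0 < δ) (hδ1 : δ < 1)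
    (μ : Measure ℝ) [SigmaFinite μ]
    (hμ : ∫⁻ t in Ioi (0:ℝ), ENNReal.ofReal (t ^ (2 / p - 1)) ∂μ < ⊤) :
    ∀ f : ℂ → ℂ, MemAp p f →
      apNorm p (fun z => hausdorffOp μ f z - hausdorffTrunc μ δ f z) ≤
        (∫⁻ t in Ioo 0 δ ∪ Ioi (1/δ), ENNReal.ofReal (t ^ (2 / p - 1)) ∂μ) *
          apNorm p f :=
  stmt13_general p δ hp hδ0 μ
end
end
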